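/- Let R be a nonempty closed subset of the nonnegative reals satisfying the 4-values condition and let G = (G; E, δ^G) be a connected, regular, metric R-graph. Then (G, d^G) is a metric space with all distances in R, and δ^G(a,b) = d^G(a,b) for every edge {a,b} ∈ E. -/

import Mathlib

/-- For `a, b ∈ R`, `a ⊕ b := sup {x ∈ R | x ≤ a + b}`. -/
noncomputable def oplus (R : Set ℝ) (a b : ℝ) : ℝ :=
  sSup {x | x ∈ R ∧ x ≤ a + b}

/-- A triple `(a,b,c)` is metric if each entry is at most the sum of the other two. -/
def IsMetricTriple (a b c : ℝ) : Prop :=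
  a ≤ b + c ∧ b ≤ a + c ∧ c ≤ a + b

/-- The 4-values condition. -/
def FourValues (S : Set ℝ) : Prop :=
  ∀ a ∈ S, ∀ b ∈ S, ∀ c ∈ S, ∀ d ∈ S,
    max b (max c d) ≤ a → a ≤ b + c + d →
      ∀ x ∈ S, IsMetricTriple a b x → IsMetricTriple c d x →
        ∃ y ∈ S, IsMetricTriple a d y ∧ IsMetricTriple c b y

/-- The `⊕`-sum `a₀ ⊕ (a₁ ⊕ (⋯ ⊕ aₙ))` of a list of reals. -/
noncomputable def oplusList (R : Set ℝ) : List ℝ → ℝ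
  | [] => 0
  | [a] => a
  | a :: b :: l => oplus R a (oplusList R (b :: l))

/-- The `⊕`-length `δ(W)` of a walk `W`. -/
noncomputable def walkDelta (R : Set ℝ) {V : Type} {G : SimpleGraph V} (δ : V → V → ℝ)
    {a b : V} (w : G.Walk a b) : ℝ :=
  oplusList R (w.darts.map fun d => δ d.toProd.1 d.toProd.2)

/-- `d(a,b) = inf {δ(W) | W a walk from a to b}`. -/
noncomputable def gdist (R : Set ℝ) {V : Type} (G : SimpleGraph V) (δ : V → V → ℝ)
    (a b : V) : ℝ :=
  sInf {x | ∃ w : G.Walk a b, x = walkDelta R δ w}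

/-- An `R`-graph: a simple graph together with a symmetric edge-distance function
with values in `R` which is positive on edges. -/
def IsRGraph (R : Set ℝ) {V : Type} (G : SimpleGraph V) (δ : V → V → ℝ) : Prop :=
  ∀ x y : V, G.Adj x y → δ x y ∈ R ∧ 0 < δ x y ∧ δ x y = δ y x

/-- An `R`-graph is regular if `d(a,b) > 0` for all distinct `a`, `b`. -/
def RegularRGraph (R : Set ℝ) {V : Type} (G : SimpleGraph V) (δ : V → V → ℝ) : Prop :=
  ∀ a b : V, a ≠ b → 0 < gdist R G δ a b

/-- An `R`-graph is metric if `δ(a,b) = d(a,b)` for every edge `{a,b}`. -/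
def MetricRGraph (R : Set ℝ) {V : Type} (G : SimpleGraph V) (δ : V → V → ℝ) : Prop :=
  ∀ a b : V, G.Adj a b → δ a b = gdist R G δ a b

section Aux

variable {R : Set ℝ}

lemma oplus_bddAbove (R : Set ℝ) (a b : ℝ) : BddAbove {x | x ∈ R ∧ x ≤ a + b} :=
  ⟨a + b, fun _ hx => hx.2⟩

lemma le_oplus_of {a b z : ℝ} (hz : z ∈ R) (hle : z ≤ a + b) : z ≤ oplus R a b :=
  le_csSup (oplus_bddAbove R a b) ⟨hz, hle⟩

lemma self_le_oplus {a b : ℝ} (ha : a ∈ R) (hb : 0 ≤ b) : a ≤ oplus R a b :=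
  le_oplus_of ha (le_add_of_nonneg_right hb)

lemma oplus_le_add {a b : ℝ} (ha : a ∈ R) (hb : 0 ≤ b) : oplus R a b ≤ a + b :=
  csSup_le ⟨a, ha, le_add_of_nonneg_right hb⟩ fun _ hx => hx.2

lemma oplus_mem (hcl : IsClosed R) {a b : ℝ} (ha : a ∈ R) (hb : 0 ≤ b) : oplus R a b ∈ R := by
  have hset : {x | x ∈ R ∧ x ≤ a + b} = R ∩ Set.Iic (a + b) := rfl
  have : sSup {x | x ∈ R ∧ x ≤ a + b} ∈ {x | x ∈ R ∧ x ≤ a + b} := by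
    rw [hset]
    exact (hcl.inter isClosed_Iic).csSup_mem
      ⟨a, ha, le_add_of_nonneg_right hb⟩ (by rw [← hset]; exact oplus_bddAbove R a b)
  exact this.1

lemma oplus_comm (R : Set ℝ) (a b : ℝ) : oplus R a b = oplus R b a := by
  unfold oplus; rw [add_comm]

lemma oplus_key (hcl : IsClosed R) (hpos : ∀ x ∈ R, 0 ≤ x) (h4 : FourValues R)
    {a b c : ℝ} (ha : a ∈ R) (hb : b ∈ R) (hc : c ∈ R) :
    oplus R a (oplus R b c) ≤ oplus R c (oplus R b a) := by
  have ha0 := hpos a ha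
  have hb0 := hpos b hb
  have hc0 := hpos c hc
  set w := oplus R b c with hw
  have hwR : w ∈ R := oplus_mem hcl hb hc0
  have hw0 : 0 ≤ w := hpos _ hwR
  have hbw : b ≤ w := self_le_oplus hb hc0
  have hcw : c ≤ w := le_oplus_of hc (by linarith)
  have hwbc : w ≤ b + c := oplus_le_add hb hc0
  set s := oplus R a w with hs
  have hsR : s ∈ R := oplus_mem hcl ha hw0
  have has : a ≤ s := self_le_oplus ha hw0
  have hws : w ≤ s := le_oplus_of hwR (by linarith)
  have hsaw : s ≤ a + w := oplus_le_add ha hw0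
  obtain ⟨y, hyR, hy1, hy2⟩ :=
    h4 s hsR a ha b hb c hc
      (by
        rw [max_le_iff, max_le_iff]
        exact ⟨has, by linarith, by linarith⟩)
      (by linarith) w hwR
      ⟨by linarith, by linarith, by linarith⟩
      ⟨by linarith, by linarith, by linarith⟩
  have hy0 : 0 ≤ y := hpos y hyR
  have hyba : y ≤ oplus R b a := le_oplus_of hyR hy2.2.2
  exact le_oplus_of hsR (by have := hy1.1; linarith)

lemma oplus_assoc (hcl : IsClosed R) (hpos : ∀ x ∈ R, 0 ≤ x) (h4 : FourValues R)
    {a b c : ℝ} (ha : a ∈ R) (hb : b ∈ R) (hc : c ∈ R) :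
    oplus R (oplus R a b) c = oplus R a (oplus R b c) := by
  rw [oplus_comm R (oplus R a b) c, oplus_comm R a b]
  exact le_antisymm (oplus_key hcl hpos h4 hc hb ha) (oplus_key hcl hpos h4 ha hb hc)

lemma oplusList_basic (hcl : IsClosed R) (hpos : ∀ x ∈ R, 0 ≤ x) :
    ∀ l : List ℝ, (∀ x ∈ l, x ∈ R) → 0 ≤ oplusList R l ∧ (l ≠ [] → oplusList R l ∈ R)
  | [], _ => ⟨le_refl 0, fun h => absurd rfl h⟩
  | [a], h => ⟨hpos a (h a (by simp)), fun _ => h a (by simp)⟩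
  | a :: b :: t, h => by
    have ih := oplusList_basic hcl hpos (b :: t) fun x hx => h x (List.mem_cons_of_mem a hx)
    have haR : a ∈ R := h a List.mem_cons_self
    have h1 : oplusList R (a :: b :: t) = oplus R a (oplusList R (b :: t)) := rfl
    refine ⟨?_, fun _ => ?_⟩
    · rw [h1]; exact le_trans (hpos a haR) (self_le_oplus haR ih.1)
    · rw [h1]; exact oplus_mem hcl haR ih.1

lemma oplusList_append_eq (hcl : IsClosed R) (hpos : ∀ x ∈ R, 0 ≤ x) (h4 : FourValues R) :
    ∀ l1 l2 : List ℝ, (∀ x ∈ l1, x ∈ R) → (∀ x ∈ l2, x ∈ R) → l1 ≠ [] → l2 ≠ [] →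
      oplusList R (l1 ++ l2) = oplus R (oplusList R l1) (oplusList R l2)
  | [], _, _, _, h, _ => absurd rfl h
  | [a], l2, _, _, _, h2ne => by
    cases l2 with
    | nil => exact absurd rfl h2ne
    | cons b t => rfl
  | a :: b :: t, l2, h1, h2, _, h2ne => by
    have ih := oplusList_append_eq hcl hpos h4 (b :: t) l2
      (fun x hx => h1 x (List.mem_cons_of_mem a hx)) h2 (by simp) h2ne
    have haR : a ∈ R := h1 a List.mem_cons_self
    have htR : oplusList R (b :: t) ∈ R :=
      (oplusList_basic hcl hpos (b :: t) fun x hx => h1 x (List.mem_cons_of_mem a hx)).2 (by simp)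
    have hl2R : oplusList R l2 ∈ R := (oplusList_basic hcl hpos l2 h2).2 h2ne
    have e1 : oplusList R ((a :: b :: t) ++ l2) = oplus R a (oplusList R ((b :: t) ++ l2)) := by
      cases t <;> rfl
    rw [e1, ih, ← oplus_assoc hcl hpos h4 haR htR hl2R]
    rfl

lemma oplusList_reverse (hcl : IsClosed R) (hpos : ∀ x ∈ R, 0 ≤ x) (h4 : FourValues R) :
    ∀ l : List ℝ, (∀ x ∈ l, x ∈ R) → oplusList R l.reverse = oplusList R l
  | [], _ => rfl
  | [a], _ => rfl
  | a :: b :: t, h => by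
    have hR : ∀ x ∈ b :: t, x ∈ R := fun x hx => h x (List.mem_cons_of_mem a hx)
    have haR : a ∈ R := h a List.mem_cons_self
    have ih := oplusList_reverse hcl hpos h4 (b :: t) hR
    have e1 : (a :: b :: t).reverse = (b :: t).reverse ++ [a] := by simp
    rw [e1, oplusList_append_eq hcl hpos h4 _ [a]
      (fun x hx => hR x (List.mem_reverse.1 hx)) (by simpa using haR) (by simp) (by simp),
      ih, oplus_comm]
    rfl

lemma oplusList_append_le (hcl : IsClosed R) (hpos : ∀ x ∈ R, 0 ≤ x) (h4 : FourValues R)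
    (l1 l2 : List ℝ) (h1 : ∀ x ∈ l1, x ∈ R) (h2 : ∀ x ∈ l2, x ∈ R) :
    oplusList R (l1 ++ l2) ≤ oplusList R l1 + oplusList R l2 := by
  rcases eq_or_ne l1 [] with rfl | h1ne
  · simp [oplusList]
  rcases eq_or_ne l2 [] with rfl | h2ne
  · simp [oplusList]
  · rw [oplusList_append_eq hcl hpos h4 l1 l2 h1 h2 h1ne h2ne]
    exact oplus_le_add ((oplusList_basic hcl hpos l1 h1).2 h1ne)
      (oplusList_basic hcl hpos l2 h2).1

end Aux

/-- For a connected, regular, metric `R`-graph `G`, the function `d^G` is a metric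
on the vertex set, all (nonzero) distances lie in `R`, and `δ^G = d^G` on edges. -/
theorem gdist_metric_space (R : Set ℝ) (hne : R.Nonempty)
    (hcl : IsClosed R) (hpos : ∀ x ∈ R, 0 ≤ x) (h4 : FourValues R)
    {V : Type} (G : SimpleGraph V) (δ : V → V → ℝ)
    (hG : IsRGraph R G δ) (hconn : G.Connected)
    (hreg : RegularRGraph R G δ) (hmet : MetricRGraph R G δ) :
    (∀ x : V, gdist R G δ x x = 0) ∧
      (∀ x y : V, x ≠ y → 0 < gdist R G δ x y) ∧
      (∀ x y : V, gdist R G δ x y = gdist R G δ y x) ∧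
      (∀ x y z : V, gdist R G δ x z ≤ gdist R G δ x y + gdist R G δ y z) ∧
      (∀ x y : V, x ≠ y → gdist R G δ x y ∈ R) ∧
      (∀ x y : V, G.Adj x y → δ x y = gdist R G δ x y) := by
  -- the list of edge-lengths of a walk consists of elements of `R`
  have hlmem : ∀ {x y : V} (w : G.Walk x y),
      ∀ r ∈ w.darts.map fun d => δ d.toProd.1 d.toProd.2, r ∈ R := by
    intro x y w r hr
    obtain ⟨d, _, rfl⟩ := List.mem_map.1 hr
    exact (hG _ _ d.adj).1
  have hDnonneg : ∀ {x y : V} (w : G.Walk x y), 0 ≤ walkDelta R δ w := fun w =>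
    (oplusList_basic hcl hpos _ (hlmem w)).1
  -- the distance set
  have hSne : ∀ x y : V, {r | ∃ w : G.Walk x y, r = walkDelta R δ w}.Nonempty := by
    intro x y
    obtain ⟨w⟩ := hconn.preconnected x y
    exact ⟨_, w, rfl⟩
  have hSbdd : ∀ x y : V, BddBelow {r | ∃ w : G.Walk x y, r = walkDelta R δ w} := by
    intro x y
    exact ⟨0, fun r hr => by obtain ⟨w, rfl⟩ := hr; exact hDnonneg w⟩
  have hd_le : ∀ {x y : V} (w : G.Walk x y), gdist R G δ x y ≤ walkDelta R δ w :=
    fun {x y} w => csInf_le (hSbdd x y) ⟨w, rfl⟩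
  -- reversal preserves walkDelta
  have hDrev : ∀ {x y : V} (w : G.Walk x y), walkDelta R δ w.reverse = walkDelta R δ w := by
    intro x y w
    unfold walkDelta
    rw [SimpleGraph.Walk.darts_reverse, List.map_reverse, List.map_map]
    have hmapeq : w.darts.map ((fun d => δ d.toProd.1 d.toProd.2) ∘ SimpleGraph.Dart.symm)
        = w.darts.map fun d => δ d.toProd.1 d.toProd.2 := by
      refine List.map_congr_left fun d _ => ?_
      show δ d.symm.toProd.1 d.symm.toProd.2 = δ d.toProd.1 d.toProd.2
      have : d.symm.toProd = d.toProd.swap := rfl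
      rw [this]
      exact ((hG _ _ d.adj).2.2).symm
    rw [hmapeq]
    exact oplusList_reverse hcl hpos h4 _ (hlmem w)
  refine ⟨?_, fun x y h => hreg x y h, ?_, ?_, ?_, fun x y h => hmet x y h⟩
  · -- gdist x x = 0
    intro x
    refine le_antisymm ?_ (le_csInf (hSne x x) ?_)
    · have h0 : (0 : ℝ) ∈ {r | ∃ w : G.Walk x x, r = walkDelta R δ w} :=
        ⟨SimpleGraph.Walk.nil, rfl⟩
      exact csInf_le (hSbdd x x) h0
    · rintro r ⟨w, rfl⟩
      exact hDnonneg w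
  · -- symmetry
    intro x y
    unfold gdist
    congr 1
    ext r
    constructor
    · rintro ⟨w, rfl⟩
      exact ⟨w.reverse, (hDrev w).symm⟩
    · rintro ⟨w, rfl⟩
      exact ⟨w.reverse, (hDrev w).symm⟩
  · -- triangle inequality
    intro x y z
    have key : ∀ (w1 : G.Walk x y) (w2 : G.Walk y z),
        gdist R G δ x z ≤ walkDelta R δ w1 + walkDelta R δ w2 := by
      intro w1 w2
      refine le_trans (hd_le (w1.append w2)) ?_
      unfold walkDelta
      rw [SimpleGraph.Walk.darts_append, List.map_append]
      exact oplusList_append_le hcl hpos h4 _ _ (hlmem w1) (hlmem w2)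
    have step1 : ∀ w2 : G.Walk y z,
        gdist R G δ x z ≤ gdist R G δ x y + walkDelta R δ w2 := by
      intro w2
      have : gdist R G δ x z - walkDelta R δ w2 ≤ gdist R G δ x y := by
        refine le_csInf (hSne x y) ?_
        rintro r ⟨w1, rfl⟩
        linarith [key w1 w2]
      linarith
    have step2 : gdist R G δ x z - gdist R G δ x y ≤ gdist R G δ y z := by
      refine le_csInf (hSne y z) ?_
      rintro r ⟨w2, rfl⟩
      linarith [step1 w2]
    linarith
  · -- distances lie in R
    intro x y hxy
    have hsub : {r | ∃ w : G.Walk x y, r = walkDelta R δ w} ⊆ R := by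
      rintro r ⟨w, rfl⟩
      have hnil : w.darts.map (fun d => δ d.toProd.1 d.toProd.2) ≠ [] := by
        intro hmap
        have : w.length = 0 := by
          simpa using congrArg List.length hmap
        exact hxy (SimpleGraph.Walk.eq_of_length_eq_zero this)
      exact (oplusList_basic hcl hpos _ (hlmem w)).2 hnil
    have hmemcl : gdist R G δ x y ∈ closure {r | ∃ w : G.Walk x y, r = walkDelta R δ w} :=
      csInf_mem_closure (hSne x y) (hSbdd x y)
    have := closure_mono hsub hmemcl
    rwa [hcl.closure_eq] at this
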